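/- arXiv:1403.2340 — 5 statements merged into one kernel-verified Lean document; each statement's English description precedes it below -/
import Mathlib

section
/- There is a constant C depending only on the dimension d with the following property. Let X be a bounded open convex subset of ℝ^d, let ε > 0, let U_ε ⊆ ∂X be a boundary ε-sample with associated discretized constraint set M_ε, and let γ > 0. Then the directed Hausdorff distance satisfies d_H(B_Lip^γ ∩ H_{M_ε} | B_Lip^γ ∩ H) ≤ C γ ε; that is, for every γ-Lipschitz g ∈ C(X) with ℓ(g) ≤ 0 for all ℓ ∈ M_ε, there exists a convex γ-Lipschitz function f on X with ‖g − f‖_∞ ≤ C γ ε. -/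
open Set NNReal

noncomputable section

abbrev Esp (d : ℕ) := EuclideanSpace ℝ (Fin d)

/-- The value of the affine form `ℓ_{xyz}` on a function `g`: with `λ = ‖z−y‖/‖x−y‖`,
`ℓ_{xyz}(g) = g(z) − λ g(x) − (1−λ) g(y)`. -/
def ellVal {d : ℕ} (g : Esp d → ℝ) (x y z : Esp d) : ℝ :=
  g z - (‖z - y‖ / ‖x - y‖) * g x - (1 - ‖z - y‖ / ‖x - y‖) * g y

/-- The discrete segment `c_{pq} = {p + εi(q−p)/‖q−p‖ : i ∈ ℕ, 0 ≤ i ≤ ‖q−p‖/ε}`. -/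
def discreteSeg {d : ℕ} (ε : ℝ) (p q : Esp d) : Set (Esp d) :=
  {x | ∃ i : ℕ, (i : ℝ) ≤ ‖q - p‖ / ε ∧ x = p + ((ε * i) / ‖q - p‖) • (q - p)}

/-- `U` is an `ε`-sample of the boundary of `X`: `U ⊆ ∂X` and every point of `∂X` is within
distance `ε` of a point of `U`. -/
def IsBoundarySample {d : ℕ} (X : Set (Esp d)) (ε : ℝ) (U : Set (Esp d)) : Prop :=
  U ⊆ frontier X ∧ ∀ x ∈ frontier X, ∃ u ∈ U, ‖x - u‖ ≤ ε

/-- The data `(x, y, z)` defines a form `ℓ_{xyz}` of the discretized constraint set `M_ε`: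
`x, y, z ∈ c_{pq}` for some distinct `p, q ∈ U` and `z ∈ [x,y]`. -/
def MemMeps {d : ℕ} (ε : ℝ) (U : Set (Esp d)) (x y z : Esp d) : Prop :=
  ∃ p ∈ U, ∃ q ∈ U, p ≠ q ∧ x ∈ discreteSeg ε p q ∧ y ∈ discreteSeg ε p q ∧
    z ∈ discreteSeg ε p q ∧ x ≠ y ∧ z ∈ segment ℝ x y

/-- `g` belongs to `H_{M_ε}`, i.e. `ℓ(g) ≤ 0` for every form `ℓ ∈ M_ε`. -/
def SatisfiesMeps {d : ℕ} (ε : ℝ) (U : Set (Esp d)) (g : Esp d → ℝ) : Prop :=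
  ∀ x y z : Esp d, MemMeps ε U x y z → ellVal g x y z ≤ 0

/-!
Every segment `[x, y]` of `closure X` extends to a chord of `X` whose endpoints lie on `∂X`, within
`ε` of two sample points `p, q`. Snapping `x`, `y` and `a • x + b • y` to the discrete segment
`c_{pq}` moves each of them by at most `2ε`, so the constraints `M_ε` together with the Lipschitz
bound make `g` a `12γε`-approximately convex function on `closure X`. By Carathéodory, the convex
hull of the graph of such a function lies at most `(d + 1) · 12γε` below the graph, and the convex
`γ`-Lipschitz function `u ↦ inf {t + γ‖u - w‖ : (w, t) in that hull}` is squeezed between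
`g - 12(d + 1)γε` and `g` on `X`.
-/

open AffineMap Module

section ApproxConvex

variable {E : Type*} [AddCommGroup E] [Module ℝ E]

def ApproxConvexOn (D : Set E) (δ : ℝ) (g : E → ℝ) : Prop :=
  ∀ ⦃x⦄, x ∈ D → ∀ ⦃y⦄, y ∈ D → ∀ ⦃a b : ℝ⦄, 0 ≤ a → 0 ≤ b → a + b = 1 →
    g (a • x + b • y) ≤ a * g x + b * g y + δ

variable {D : Set E} {δ : ℝ} {g : E → ℝ}

theorem ApproxConvexOn.map_sum_le (hD : Convex ℝ D) (hg : ApproxConvexOn D δ g) (hδ : 0 ≤ δ)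
    {ι : Type*} {t : Finset ι} {w : ι → ℝ} {p : ι → E} (h₀ : ∀ i ∈ t, 0 ≤ w i)
    (h₁ : ∑ i ∈ t, w i = 1) (hp : ∀ i ∈ t, p i ∈ D) :
    g (∑ i ∈ t, w i • p i) ≤ ∑ i ∈ t, w i * g (p i) + ((t.card : ℝ) - 1) * δ := by
  induction t using Finset.cons_induction generalizing w with
  | empty => simp at h₁
  | cons i s hi ih =>
    simp only [Finset.sum_cons, Finset.mem_cons, forall_eq_or_imp, Finset.card_cons,
      Nat.cast_add, Nat.cast_one, add_sub_cancel_right] at *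
    set c := ∑ j ∈ s, w j
    have hc : 0 ≤ c := Finset.sum_nonneg h₀.2
    rcases hc.eq_or_lt with hc0 | hcpos
    · have hw : ∀ j ∈ s, w j = 0 := (Finset.sum_eq_zero_iff_of_nonneg h₀.2).1 hc0.symm
      have hwi : w i = 1 := by linarith
      have hs₁ : ∑ j ∈ s, w j • p j = 0 := Finset.sum_eq_zero fun j hj => by simp [hw j hj]
      have hs₂ : ∑ j ∈ s, w j * g (p j) = 0 := Finset.sum_eq_zero fun j hj => by simp [hw j hj]
      rw [hs₁, hs₂, hwi, one_smul, one_mul, add_zero, add_zero]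
      exact le_add_of_nonneg_right (by positivity)
    · have hs : (1 : ℝ) ≤ s.card := by
        have : s.Nonempty := Finset.nonempty_of_sum_ne_zero hcpos.ne'
        exact_mod_cast this.card_pos
      have hw₀ : ∀ j ∈ s, 0 ≤ c⁻¹ * w j := fun j hj => mul_nonneg (inv_nonneg.2 hc) (h₀.2 j hj)
      have hw₁ : ∑ j ∈ s, c⁻¹ * w j = 1 := by rw [← Finset.mul_sum, inv_mul_cancel₀ hcpos.ne']
      have hq := ih hw₀ hw₁ hp.2
      have hsum : ∑ j ∈ s, w j • p j = c • ∑ j ∈ s, (c⁻¹ * w j) • p j := by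
        rw [Finset.smul_sum]
        exact Finset.sum_congr rfl fun j _ => by rw [smul_smul, mul_inv_cancel_left₀ hcpos.ne']
      have hsumg : ∑ j ∈ s, w j * g (p j) = c * ∑ j ∈ s, c⁻¹ * w j * g (p j) := by
        rw [Finset.mul_sum]
        exact Finset.sum_congr rfl fun j _ => by rw [← mul_assoc, mul_inv_cancel_left₀ hcpos.ne']
      have hstep := hg hp.1 (hD.sum_mem hw₀ hw₁ hp.2) h₀.1 hc (by linarith)
      have hc₁ : c ≤ 1 := by linarith [h₀.1]
      rw [hsum, hsumg]
      calc _ ≤ _ := hstep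
        _ ≤ w i * g (p i) + c * (∑ j ∈ s, c⁻¹ * w j * g (p j) + (s.card - 1) * δ) + δ := by
          gcongr
        _ ≤ _ := by nlinarith [mul_nonneg (mul_nonneg (sub_nonneg.2 hc₁) (sub_nonneg.2 hs)) hδ]

theorem ApproxConvexOn.le_of_mem_convexHull_graph [FiniteDimensional ℝ E] (hD : Convex ℝ D)
    (hg : ApproxConvexOn D δ g) (hδ : 0 ≤ δ) {z : E × ℝ}
    (hz : z ∈ convexHull ℝ ((fun x => (x, g x)) '' D)) :
    z.1 ∈ D ∧ g z.1 ≤ z.2 + (finrank ℝ E + 1) * δ := by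
  obtain ⟨ι, _, p, w, hpD, hind, hw₀, hw₁, rfl⟩ := eq_pos_convex_span_of_mem_convexHull hz
  have hgraph : ∀ i, (p i).1 ∈ D ∧ (p i).2 = g (p i).1 := fun i => by
    obtain ⟨x, hx, hxp⟩ := hpD ⟨i, rfl⟩
    exact hxp ▸ ⟨hx, rfl⟩
  have hcard : (Fintype.card ι : ℝ) ≤ finrank ℝ E + 2 := by
    have := hind.card_le_finrank_succ.trans (Nat.succ_le_succ (Submodule.finrank_le _))
    rw [finrank_prod, finrank_self] at this
    exact_mod_cast this
  have hsum := hg.map_sum_le hD hδ (t := Finset.univ) (fun i _ => (hw₀ i).le) hw₁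
    (fun i _ => (hgraph i).1)
  simp only [Prod.fst_sum, Prod.snd_sum, Prod.smul_fst, Prod.smul_snd, smul_eq_mul,
    (hgraph _).2, Finset.card_univ] at hsum ⊢
  exact ⟨hD.sum_mem (fun i _ => (hw₀ i).le) hw₁ (fun i _ => (hgraph i).1), by nlinarith⟩

end ApproxConvex

section Envelope

variable {E : Type*} [PseudoMetricSpace E] {γ : ℝ≥0} {K : Set (E × ℝ)}

/-- The largest `γ`-Lipschitz function `f` with `f w ≤ t` for all `(w, t) ∈ K`. -/
def lipschitzEnvelope (γ : ℝ≥0) (K : Set (E × ℝ)) (u : E) : ℝ :=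
  sInf ((fun z : E × ℝ => z.2 + γ * dist u z.1) '' K)

theorem lipschitzEnvelope_le {u : E}
    (hbdd : BddBelow ((fun z : E × ℝ => z.2 + γ * dist u z.1) '' K)) {z : E × ℝ} (hz : z ∈ K) :
    lipschitzEnvelope γ K u ≤ z.2 + γ * dist u z.1 :=
  csInf_le hbdd (Set.mem_image_of_mem _ hz)

theorem le_lipschitzEnvelope {u : E} {m : ℝ} (hK : K.Nonempty)
    (h : ∀ z ∈ K, m ≤ z.2 + γ * dist u z.1) : m ≤ lipschitzEnvelope γ K u :=
  le_csInf (hK.image _) (Set.forall_mem_image.2 h)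

theorem bddBelow_lipschitzEnvelope {u₀ : E} {m : ℝ} (h : ∀ z ∈ K, m ≤ z.2 + γ * dist u₀ z.1)
    (u : E) : BddBelow ((fun z : E × ℝ => z.2 + γ * dist u z.1) '' K) := by
  refine ⟨m - γ * dist u₀ u, Set.forall_mem_image.2 fun z hz => ?_⟩
  have := mul_le_mul_of_nonneg_left (dist_triangle u₀ u z.1) γ.coe_nonneg
  rw [mul_add] at this
  linarith [h z hz]

theorem lipschitzWith_lipschitzEnvelope (hK : K.Nonempty)
    (hbdd : ∀ u, BddBelow ((fun z : E × ℝ => z.2 + γ * dist u z.1) '' K)) :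
    LipschitzWith γ (lipschitzEnvelope γ K) := by
  refine LipschitzWith.of_le_add_mul γ fun u v => ?_
  suffices lipschitzEnvelope γ K u - γ * dist u v ≤ lipschitzEnvelope γ K v by linarith
  refine le_lipschitzEnvelope hK fun z hz => ?_
  have := mul_le_mul_of_nonneg_left (dist_triangle u v z.1) γ.coe_nonneg
  rw [mul_add] at this
  linarith [lipschitzEnvelope_le (hbdd u) hz]

end Envelope

theorem convexOn_lipschitzEnvelope {E : Type*} [SeminormedAddCommGroup E] [NormedSpace ℝ E]
    {γ : ℝ≥0} {K : Set (E × ℝ)} (hKc : Convex ℝ K) (hK : K.Nonempty)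
    (hbdd : ∀ u, BddBelow ((fun z : E × ℝ => z.2 + γ * dist u z.1) '' K)) :
    ConvexOn ℝ univ (lipschitzEnvelope γ K) := by
  refine ⟨convex_univ, fun u _ v _ a b ha hb hab => ?_⟩
  simp only [smul_eq_mul]
  refine le_of_forall_pos_le_add fun η hη => ?_
  obtain ⟨_, ⟨z₁, hz₁, rfl⟩, h₁⟩ := exists_lt_of_csInf_lt (hK.image _)
    (lt_add_of_pos_right (lipschitzEnvelope γ K u) hη)
  obtain ⟨_, ⟨z₂, hz₂, rfl⟩, h₂⟩ := exists_lt_of_csInf_lt (hK.image _)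
    (lt_add_of_pos_right (lipschitzEnvelope γ K v) hη)
  have hdist : dist (a • u + b • v) (a • z₁.1 + b • z₂.1) ≤
      a * dist u z₁.1 + b * dist v z₂.1 := by
    rw [dist_eq_norm, dist_eq_norm, dist_eq_norm,
      show a • u + b • v - (a • z₁.1 + b • z₂.1) = a • (u - z₁.1) + b • (v - z₂.1) by module]
    refine (norm_add_le _ _).trans_eq ?_
    rw [norm_smul_of_nonneg ha, norm_smul_of_nonneg hb]
  have := lipschitzEnvelope_le (hbdd (a • u + b • v)) (hKc hz₁ hz₂ ha hb hab)
  simp only [Prod.fst_add, Prod.snd_add, Prod.smul_fst, Prod.smul_snd, smul_eq_mul] at this h₁ h₂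
  have hη : a * η + b * η = η := by rw [← add_mul, hab, one_mul]
  nlinarith [mul_le_mul_of_nonneg_left hdist γ.coe_nonneg, mul_le_mul_of_nonneg_left h₁.le ha,
    mul_le_mul_of_nonneg_left h₂.le hb]

theorem ApproxConvexOn.exists_convexOn_lipschitzWith {E : Type*} [NormedAddCommGroup E]
    [NormedSpace ℝ E] [FiniteDimensional ℝ E] {D : Set E} {δ : ℝ} {g : E → ℝ} {γ : ℝ≥0}
    (hD : Convex ℝ D) (hg : ApproxConvexOn D δ g) (hδ : 0 ≤ δ) (hgγ : LipschitzOnWith γ g D) :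
    ∃ f : E → ℝ, ConvexOn ℝ univ f ∧ LipschitzWith γ f ∧
      ∀ x ∈ D, |g x - f x| ≤ (finrank ℝ E + 1) * δ := by
  rcases D.eq_empty_or_nonempty with rfl | ⟨x₀, hx₀⟩
  · exact ⟨0, convexOn_const 0 convex_univ, LipschitzWith.const' 0, by simp⟩
  set K := convexHull ℝ ((fun x => (x, g x)) '' D)
  have hK : K.Nonempty := ⟨(x₀, g x₀), subset_convexHull ℝ _ ⟨x₀, hx₀, rfl⟩⟩
  have hlow : ∀ u ∈ D, ∀ z ∈ K, g u - (finrank ℝ E + 1) * δ ≤ z.2 + γ * dist u z.1 := by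
    intro u hu z hz
    obtain ⟨hzD, hgz⟩ := hg.le_of_mem_convexHull_graph hD hδ hz
    linarith [hgγ.le_add_mul hu hzD]
  have hbdd := bddBelow_lipschitzEnvelope (hlow x₀ hx₀)
  refine ⟨lipschitzEnvelope γ K, convexOn_lipschitzEnvelope (convex_convexHull ℝ _) hK hbdd,
    lipschitzWith_lipschitzEnvelope hK hbdd, fun u hu => abs_sub_le_iff.2 ⟨?_, ?_⟩⟩
  · linarith [le_lipschitzEnvelope hK (hlow u hu)]
  · have := lipschitzEnvelope_le (hbdd u) (subset_convexHull ℝ _ ⟨u, hu, rfl⟩)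
    simp only [dist_self, mul_zero, add_zero] at this
    linarith [mul_nonneg (by positivity : (0 : ℝ) ≤ finrank ℝ E + 1) hδ]

section Chord

variable {E : Type*} [NormedAddCommGroup E] [NormedSpace ℝ E]

theorem exists_lineMap_mem_frontier {X : Set E} (hX : Bornology.IsBounded X) {x y : E}
    (hy : y ∈ closure X) (hxy : x ≠ y) : ∃ t : ℝ, 1 ≤ t ∧ lineMap x y t ∈ frontier X := by
  set S := {t : ℝ | 1 ≤ t ∧ lineMap x y t ∈ closure X}
  have hS : IsClosed S := isClosed_Ici.inter (isClosed_closure.preimage lineMap_continuous)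
  have hSne : S.Nonempty := ⟨1, le_rfl, by simpa using hy⟩
  have hSbdd : BddAbove S :=
    (((antilipschitzWith_lineMap hxy).isBounded_preimage hX.closure).subset
      fun _ ht => ht.2).bddAbove
  obtain ⟨hT₁, hTX⟩ := hS.csSup_mem hSne hSbdd
  refine ⟨sSup S, hT₁, frontier_closure_subset ⟨by rwa [closure_closure], fun hint => ?_⟩⟩
  obtain ⟨η, hη, hball⟩ :=
    Metric.isOpen_iff.1 (isOpen_interior.preimage lineMap_continuous) _ hint
  have hmem : sSup S + η / 2 ∈ S :=
    ⟨by linarith, interior_subset (hball (by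
      rw [Metric.mem_ball, Real.dist_eq, add_sub_cancel_left, abs_of_pos (half_pos hη)]
      linarith))⟩
  linarith [le_csSup hSbdd hmem]

theorem exists_frontier_chord {X : Set E} (hX : Bornology.IsBounded X) {x y : E}
    (hx : x ∈ closure X) (hy : y ∈ closure X) (hxy : x ≠ y) :
    ∃ p ∈ frontier X, ∃ q ∈ frontier X, ∃ s t : ℝ, 0 ≤ s ∧ s ≤ t ∧ t ≤ 1 ∧
      lineMap p q s = x ∧ lineMap p q t = y := by
  obtain ⟨t₀, ht₀, hp⟩ := exists_lineMap_mem_frontier hX hx hxy.symm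
  obtain ⟨t₁, ht₁, hq⟩ := exists_lineMap_mem_frontier hX hy hxy
  have hT : 0 < t₀ + t₁ - 1 := by linarith
  -- on the line `lineMap x y`, the endpoints sit at parameters `1 - t₀` and `t₁`
  refine ⟨_, hp, _, hq, (t₀ - 1) / (t₀ + t₁ - 1), t₀ / (t₀ + t₁ - 1), by positivity,
    by gcongr; linarith, by rw [div_le_one hT]; linarith, ?_, ?_⟩ <;>
  · simp only [lineMap_apply_module']
    match_scalars <;> field_simp <;> ring

theorem dist_lineMap_lineMap_le {a b a' b' : E} {θ r : ℝ} (hθ₀ : 0 ≤ θ) (hθ₁ : θ ≤ 1)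
    (ha : dist a a' ≤ r) (hb : dist b b' ≤ r) :
    dist (lineMap a b θ) (lineMap a' b' θ) ≤ r := by
  rw [dist_eq_norm_vsub, lineMap_vsub_lineMap, ← mem_closedBall_zero_iff]
  rw [dist_eq_norm_vsub] at ha hb
  exact (convex_closedBall 0 r).lineMap_mem (mem_closedBall_zero_iff.2 ha)
    (mem_closedBall_zero_iff.2 hb) ⟨hθ₀, hθ₁⟩

end Chord

/-- The parameter along `lineMap p q` (with `L = ‖q - p‖`) of the last point of `c_{pq}` at or
before parameter `θ`. For `p = q` it is `0`, through the junk value `x / 0 = 0`. -/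
def gridParam (ε L θ : ℝ) : ℝ := ε * ⌊θ * L / ε⌋₊ / L

theorem gridParam_mono {ε L : ℝ} (hε : 0 < ε) (hL : 0 ≤ L) : Monotone (gridParam ε L) :=
  fun θ θ' h => by unfold gridParam; gcongr

theorem dist_lineMap_gridParam_le {E : Type*} [NormedAddCommGroup E] [NormedSpace ℝ E]
    {ε θ : ℝ} (hε : 0 < ε) (hθ : 0 ≤ θ) (p q : E) :
    dist (lineMap p q θ) (lineMap p q (gridParam ε ‖q - p‖ θ)) ≤ ε := by
  rw [dist_lineMap_lineMap, dist_eq_norm' p q, Real.dist_eq]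
  rcases (norm_nonneg (q - p)).eq_or_lt with hL | hL
  · rw [← hL, mul_zero]; exact hε.le
  have hfloor := Nat.floor_le (div_nonneg (mul_nonneg hθ hL.le) hε.le)
  have hfloor' := Nat.lt_floor_add_one (θ * ‖q - p‖ / ε)
  rw [le_div_iff₀ hε] at hfloor
  rw [div_lt_iff₀ hε] at hfloor'
  rw [gridParam, ← abs_of_pos hL, ← abs_mul, abs_of_pos hL, sub_mul,
    div_mul_cancel₀ _ hL.ne', abs_le]
  constructor <;> nlinarith

theorem lineMap_gridParam_mem_discreteSeg {d : ℕ} {ε θ : ℝ} (hε : 0 < ε) (hθ₀ : 0 ≤ θ)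
    (hθ₁ : θ ≤ 1) (p q : Esp d) : lineMap p q (gridParam ε ‖q - p‖ θ) ∈ discreteSeg ε p q := by
  refine ⟨⌊θ * ‖q - p‖ / ε⌋₊, ?_, by rw [lineMap_apply_module', add_comm, gridParam]⟩
  refine (Nat.floor_le (by positivity)).trans ?_
  gcongr
  exact mul_le_of_le_one_left (norm_nonneg _) hθ₁

theorem discreteSeg_subset_segment {d : ℕ} {ε : ℝ} (hε : 0 < ε) (p q : Esp d) :
    discreteSeg ε p q ⊆ segment ℝ p q := by
  rintro _ ⟨i, hi, rfl⟩
  rw [segment_eq_image']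
  refine ⟨ε * i / ‖q - p‖, ⟨by positivity, div_le_one_of_le₀ ?_ (norm_nonneg _)⟩, rfl⟩
  rw [le_div_iff₀ hε] at hi
  linarith

theorem exists_discreteSeg_near {d : ℕ} {X : Set (Esp d)} (hX : Bornology.IsBounded X) {ε : ℝ}
    (hε : 0 < ε) {U : Set (Esp d)} (hU : IsBoundarySample X ε U) {x y : Esp d}
    (hx : x ∈ closure X) (hy : y ∈ closure X) (hxy : x ≠ y) {a b : ℝ} (ha : 0 ≤ a) (hb : 0 ≤ b)
    (hab : a + b = 1) :
    ∃ p ∈ U, ∃ q ∈ U, ∃ x' ∈ discreteSeg ε p q, ∃ y' ∈ discreteSeg ε p q,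
      ∃ z' ∈ discreteSeg ε p q, z' ∈ segment ℝ x' y' ∧
        dist x x' ≤ 2 * ε ∧ dist y y' ≤ 2 * ε ∧ dist (a • x + b • y) z' ≤ 2 * ε := by
  obtain ⟨x₀, hx₀, y₀, hy₀, s, t, hs, hst, ht, rfl, rfl⟩ := exists_frontier_chord hX hx hy hxy
  obtain ⟨p, hp, hpx₀⟩ := hU.2 x₀ hx₀
  obtain ⟨q, hq, hqy₀⟩ := hU.2 y₀ hy₀
  set grid := fun θ => lineMap p q (gridParam ε ‖q - p‖ θ)
  have hnear : ∀ θ, 0 ≤ θ → θ ≤ 1 → dist (lineMap x₀ y₀ θ) (grid θ) ≤ 2 * ε := fun θ h₀ h₁ =>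
    calc dist (lineMap x₀ y₀ θ) (grid θ)
        ≤ dist (lineMap x₀ y₀ θ) (lineMap p q θ) + dist (lineMap p q θ) (grid θ) :=
          dist_triangle _ _ _
      _ ≤ ε + ε := add_le_add
          (dist_lineMap_lineMap_le h₀ h₁ (by rwa [dist_eq_norm]) (by rwa [dist_eq_norm]))
          (dist_lineMap_gridParam_le hε h₀ p q)
      _ = 2 * ε := (two_mul ε).symm
  have hcombo : a • lineMap x₀ y₀ s + b • lineMap x₀ y₀ t = lineMap x₀ y₀ (a * s + b * t) :=
    (Convex.combo_affine_apply hab).symm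
  have hs' : s ≤ a * s + b * t := by nlinarith
  have ht' : a * s + b * t ≤ t := by nlinarith
  have hmono := gridParam_mono hε (norm_nonneg (q - p))
  refine ⟨p, hp, q, hq, grid s, lineMap_gridParam_mem_discreteSeg hε hs (hst.trans ht) p q,
    grid t, lineMap_gridParam_mem_discreteSeg hε (hs.trans hst) ht p q,
    grid (a * s + b * t), lineMap_gridParam_mem_discreteSeg hε (hs.trans hs') (ht'.trans ht) p q,
    ?_, hnear s hs (hst.trans ht), hnear t (hs.trans hst) ht,
    hcombo ▸ hnear _ (hs.trans hs') (ht'.trans ht)⟩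
  rw [← image_segment ℝ (lineMap p q), segment_eq_Icc (hmono hst)]
  exact ⟨_, ⟨hmono hs', hmono ht'⟩, rfl⟩

theorem dist_combo_right {E : Type*} [SeminormedAddCommGroup E] [NormedSpace ℝ E] {x y : E}
    {a b : ℝ} (ha : 0 ≤ a) (hab : a + b = 1) : dist (a • x + b • y) y = a * dist x y := by
  obtain rfl : b = 1 - a := by linarith
  rw [dist_eq_norm, dist_eq_norm, show a • x + (1 - a) • y - y = a • (x - y) by module,
    norm_smul_of_nonneg ha]

theorem ellVal_combo {d : ℕ} (g : Esp d → ℝ) {x y : Esp d} (hxy : x ≠ y) {a b : ℝ}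
    (ha : 0 ≤ a) (hab : a + b = 1) :
    ellVal g x y (a • x + b • y) = g (a • x + b • y) - a * g x - b * g y := by
  have hratio : ‖a • x + b • y - y‖ / ‖x - y‖ = a := by
    rw [← dist_eq_norm, ← dist_eq_norm, dist_combo_right ha hab,
      mul_div_cancel_right₀ _ (dist_ne_zero.2 hxy)]
  rw [ellVal, hratio, ← hab, add_sub_cancel_left]

theorem LipschitzOnWith.apply_combo_le_of_dist_le {E : Type*} [SeminormedAddCommGroup E]
    [NormedSpace ℝ E] {S : Set E} {g : E → ℝ} {γ : ℝ≥0} (hg : LipschitzOnWith γ g S)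
    {x y x' y' : E} {a b a' b' r : ℝ} (hx : x ∈ S) (hy : y ∈ S) (hz : a • x + b • y ∈ S)
    (hx' : x' ∈ S) (hy' : y' ∈ S) (hz' : a' • x' + b' • y' ∈ S) (ha : 0 ≤ a) (hab : a + b = 1)
    (ha' : 0 ≤ a') (hb' : 0 ≤ b') (hab' : a' + b' = 1) (hxx' : dist x x' ≤ r)
    (hyy' : dist y y' ≤ r) (hzz' : dist (a • x + b • y) (a' • x' + b' • y') ≤ r)
    (hconv : g (a' • x' + b' • y') ≤ a' * g x' + b' * g y') :
    g (a • x + b • y) ≤ a * g x + b * g y + 6 * γ * r := by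
  have hweight : |a' - a| * dist x y ≤ 4 * r := by
    have hsplit : (a' - a) * dist x y = a' * (dist x y - dist x' y')
        + (dist (a' • x' + b' • y') y' - dist (a • x + b • y) y) := by
      rw [dist_combo_right ha hab, dist_combo_right ha' hab']; ring
    have h₁ : |dist x y - dist x' y'| ≤ 2 * r := by
      rw [← Real.dist_eq]; linarith [dist_dist_dist_le x y x' y']
    have h₂ : |dist (a' • x' + b' • y') y' - dist (a • x + b • y) y| ≤ 2 * r := by
      rw [← Real.dist_eq, dist_comm]
      linarith [dist_dist_dist_le (a • x + b • y) y (a' • x' + b' • y') y']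
    calc |a' - a| * dist x y = |(a' - a) * dist x y| := by rw [abs_mul, abs_of_nonneg dist_nonneg]
      _ ≤ a' * |dist x y - dist x' y'|
          + |dist (a' • x' + b' • y') y' - dist (a • x + b • y) y| := by
        rw [hsplit, ← abs_of_nonneg ha', ← abs_mul, abs_of_nonneg ha']; exact abs_add_le _ _
      _ ≤ 1 * (2 * r) + 2 * r := by
        gcongr
        · linarith
      _ = 4 * r := by ring
  have hmix : (a' - a) * (g x - g y) ≤ 4 * γ * r := by
    have hgxy : |g x - g y| ≤ γ * dist x y := by
      rw [← Real.dist_eq]; exact hg.dist_le_mul x hx y hy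
    calc (a' - a) * (g x - g y) ≤ |a' - a| * |g x - g y| := by rw [← abs_mul]; exact le_abs_self _
      _ ≤ |a' - a| * (γ * dist x y) := by gcongr
      _ ≤ γ * (4 * r) := by nlinarith [γ.coe_nonneg]
      _ = 4 * γ * r := by ring
  have hγr : ∀ {u v : E}, u ∈ S → v ∈ S → dist u v ≤ r → g u ≤ g v + γ * r := fun hu hv huv =>
    (hg.le_add_mul hu hv).trans (by gcongr)
  have kx := hγr hx' hx (by rwa [dist_comm])
  have ky := hγr hy' hy (by rwa [dist_comm])
  calc g (a • x + b • y) ≤ g (a' • x' + b' • y') + γ * r := hγr hz hz' hzz'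
    _ ≤ a' * (g x + γ * r) + b' * (g y + γ * r) + γ * r := by
      linarith [mul_le_mul_of_nonneg_left kx ha', mul_le_mul_of_nonneg_left ky hb']
    _ = a * g x + b * g y + (a' - a) * (g x - g y) + 2 * γ * r := by
      linear_combination (g y + γ * r) * hab' - g y * hab
    _ ≤ a * g x + b * g y + 6 * γ * r := by linarith

theorem approxConvexOn_closure_of_satisfiesMeps {d : ℕ} {X : Set (Esp d)} (hXc : Convex ℝ X)
    (hXb : Bornology.IsBounded X) {ε : ℝ} (hε : 0 < ε) {U : Set (Esp d)}
    (hU : IsBoundarySample X ε U) {γ : ℝ≥0} {g : Esp d → ℝ}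
    (hg : LipschitzOnWith γ g (closure X)) (hM : SatisfiesMeps ε U g) :
    ApproxConvexOn (closure X) (12 * γ * ε) g := by
  intro x hx y hy a b ha hb hab
  rcases eq_or_ne x y with rfl | hxy
  · rw [← add_smul, hab, one_smul, ← add_mul, hab, one_mul]
    have : 0 ≤ 12 * (γ : ℝ) * ε := by positivity
    linarith
  obtain ⟨p, hp, q, hq, x', hx', y', hy', _, hz', ⟨a', b', ha', hb', hab', rfl⟩,
      hxx', hyy', hzz'⟩ := exists_discreteSeg_near hXb hε hU hx hy hxy ha hb hab
  have hgrid : discreteSeg ε p q ⊆ closure X := (discreteSeg_subset_segment hε p q).trans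
    (hXc.closure.segment_subset (frontier_subset_closure (hU.1 hp))
      (frontier_subset_closure (hU.1 hq)))
  have hconv : g (a' • x' + b' • y') ≤ a' * g x' + b' * g y' := by
    rcases eq_or_ne x' y' with rfl | hne
    · rw [← add_smul, hab', one_smul, ← add_mul, hab', one_mul]
    have hpq : p ≠ q := by
      rintro rfl
      obtain ⟨i, -, rfl⟩ := hx'
      obtain ⟨j, -, rfl⟩ := hy'
      simp at hne
    have := hM x' y' _ ⟨p, hp, q, hq, hpq, hx', hy', hz', hne, a', b', ha', hb', hab', rfl⟩
    rw [ellVal_combo g hne ha' hab'] at this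
    linarith
  have := hg.apply_combo_le_of_dist_le hx hy (hXc.closure hx hy ha hb hab) (hgrid hx')
    (hgrid hy') (hgrid hz') ha hab ha' hb' hab' hxx' hyy' hzz' hconv
  linarith

/-- There is a constant `C = C(d)` such that for every bounded open convex
`X ⊆ ℝ^d`, every `ε > 0`, every boundary `ε`-sample `U ⊆ ∂X` with constraint set `M_ε`,
and every `γ > 0`: for every `γ`-Lipschitz `g ∈ C(X)` with `ℓ(g) ≤ 0` for all `ℓ ∈ M_ε`,
there exists a convex `γ`-Lipschitz function `f` on `X` with `‖g − f‖_∞ ≤ C γ ε`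
(that is, `d_H(B_Lip^γ ∩ H_{M_ε} | B_Lip^γ ∩ H) ≤ C γ ε`). -/
theorem stmt1 (d : ℕ) : ∃ C : ℝ, 0 < C ∧
    ∀ (X : Set (Esp d)), Convex ℝ X → IsOpen X → Bornology.IsBounded X →
    ∀ ε : ℝ, 0 < ε → ∀ U : Set (Esp d), IsBoundarySample X ε U →
    ∀ γ : ℝ, 0 < γ →
    ∀ g : Esp d → ℝ, LipschitzOnWith (Real.toNNReal γ) g (closure X) →
    SatisfiesMeps ε U g →
    ∃ f : Esp d → ℝ, ConvexOn ℝ X f ∧ LipschitzOnWith (Real.toNNReal γ) f X ∧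
      ∀ x ∈ X, |g x - f x| ≤ C * γ * ε := by
  refine ⟨12 * (d + 1), by positivity, ?_⟩
  intro X hXc _ hXb ε hε U hU γ hγ g hg hM
  obtain ⟨f, hfc, hfγ, hfg⟩ := (approxConvexOn_closure_of_satisfiesMeps hXc hXb hε hU hg
    hM).exists_convexOn_lipschitzWith hXc.closure (by positivity) hg
  refine ⟨f, hfc.subset (subset_univ X) hXc, hfγ.lipschitzOnWith, fun x hx => ?_⟩
  calc |g x - f x| ≤ _ := hfg x (subset_closure hx)
    _ = 12 * (d + 1) * γ * ε := by
      rw [finrank_euclideanSpace_fin, Real.coe_toNNReal γ hγ.le]; ring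
end
end

section
/- Let X be a bounded open convex subset of ℝ^d, let α : C(X) → [0,∞] be a function, and let M be an α-relaxation of the set L₂ of two-point convexity constraints. Then for every g ∈ C(X) with ℓ(g) ≤ 0 for all ℓ ∈ M, the convex envelope ḡ of g satisfies ‖g − ḡ‖_∞ ≤ d·α(g). -/
/-!
An `α`-relaxation of `L₂` turns `ℓ(g) ≤ 0` for `ℓ ∈ M` into two-point convexity of `g` up to the
additive defect `α(g)`. Splitting a convex combination of `d + 1` points into one point and the
normalized remaining ones, Jensen's inequality then holds up to `d·α(g)`, so `g(x) - d·α(g)` is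
below every value in the infimum defining `ḡ(x)`; and `ḡ(x) ≤ g(x)` by taking all points equal
to `x`.
-/

open Set

noncomputable section

/-- The convex envelope of `g` on `X ⊆ ℝ^d`:
`ḡ(x) = inf { ∑_{i=1}^{d+1} λᵢ g(xᵢ) : xᵢ ∈ X, λ ∈ Δ^d, ∑ᵢ λᵢ xᵢ = x }`. -/
def convEnv {d : ℕ} (X : Set (Esp d)) (g : Esp d → ℝ) (x : Esp d) : ℝ :=
  sInf {t : ℝ | ∃ (p : Fin (d + 1) → Esp d) (l : Fin (d + 1) → ℝ),
    (∀ i, p i ∈ X) ∧ (∀ i, 0 ≤ l i) ∧ (∑ i, l i) = 1 ∧ (∑ i, l i • p i) = x ∧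
    t = ∑ i, l i * g (p i)}

/-- The set `L₂` of two-point convexity constraints on `X`:
`ℓ(g) = g(λx + (1−λ)y) − λ g(x) − (1−λ) g(y)` with `x, y ∈ X` and `λ ∈ [0,1]`. -/
def Ltwo {d : ℕ} (X : Set (Esp d)) : Set ((Esp d → ℝ) → ℝ) :=
  {ℓ | ∃ x ∈ X, ∃ y ∈ X, ∃ l : ℝ, 0 ≤ l ∧ l ≤ 1 ∧
    ℓ = fun g => g (l • x + (1 - l) • y) - l * g x - (1 - l) * g y}

/-- `M` is an `α`-relaxation of `L`: for every `ℓ ∈ L` and every `g ∈ C(X)` there exists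
`ℓ_g ∈ M` with `|ℓ(g) − ℓ_g(g)| ≤ α(g)`. -/
def IsAlphaRelaxation {d : ℕ} (X : Set (Esp d)) (M L : Set ((Esp d → ℝ) → ℝ))
    (α : (Esp d → ℝ) → ENNReal) : Prop :=
  ∀ ℓ ∈ L, ∀ g : Esp d → ℝ, ContinuousOn g X →
    ∃ ℓ' ∈ M, ENNReal.ofReal |ℓ g - ℓ' g| ≤ α g

section ApproxConvex

variable {E : Type*} [AddCommGroup E] [Module ℝ E]

def IsApproxConvexOn (s : Set E) (f : E → ℝ) (a : ℝ) : Prop :=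
  ∀ x ∈ s, ∀ y ∈ s, ∀ t : ℝ, 0 ≤ t → t ≤ 1 →
    f (t • x + (1 - t) • y) ≤ t * f x + (1 - t) * f y + a

lemma isApproxConvexOn_of_subsingleton [Subsingleton E] (s : Set E) (f : E → ℝ) :
    IsApproxConvexOn s f 0 := by
  intro x _ y _ t _ _
  rw [Subsingleton.elim (t • x + (1 - t) • y) x, Subsingleton.elim y x]
  linarith

theorem IsApproxConvexOn.map_sum_le {s : Set E} {f : E → ℝ} {a : ℝ}
    (hf : IsApproxConvexOn s f a) (hs : Convex ℝ s) (ha : 0 ≤ a) :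
    ∀ (n : ℕ) (w : Fin (n + 1) → ℝ) (p : Fin (n + 1) → E),
      (∀ i, 0 ≤ w i) → ∑ i, w i = 1 → (∀ i, p i ∈ s) →
      f (∑ i, w i • p i) ≤ ∑ i, w i * f (p i) + n * a := by
  intro n
  induction n with
  | zero =>
    intro w p _ hw1 _
    simp_all
  | succ n ih =>
    intro w p hw0 hw1 hp
    rw [Fin.sum_univ_succ] at hw1
    rw [Fin.sum_univ_succ (f := fun i => w i • p i),
      Fin.sum_univ_succ (f := fun i => w i * f (p i))]
    set r := ∑ i : Fin (n + 1), w i.succ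
    have hr0 : 0 ≤ r := Finset.sum_nonneg fun i _ => hw0 _
    rcases hr0.eq_or_lt with hr0 | hrpos
    · have hzero : ∀ i : Fin (n + 1), w i.succ = 0 := fun i =>
        (Finset.sum_eq_zero_iff_of_nonneg fun i _ => hw0 _).mp hr0.symm i (Finset.mem_univ _)
      have hw1' : w 0 = 1 := by linarith
      simp only [hzero, hw1', zero_smul, zero_mul, Finset.sum_const_zero, one_smul, one_mul,
        add_zero]
      have : (0 : ℝ) ≤ (n + 1 : ℕ) * a := by positivity
      linarith
    · -- Write the combination as `w 0 • p 0 + r • y`, with `y` the normalized tail.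
      set v : Fin (n + 1) → ℝ := fun i => w i.succ / r
      have hv0 : ∀ i, 0 ≤ v i := fun i => div_nonneg (hw0 _) hr0
      have hv1 : ∑ i, v i = 1 := by rw [← Finset.sum_div, div_self hrpos.ne']
      set y := ∑ i, v i • p i.succ
      have hy : y ∈ s := hs.sum_mem (fun i _ => hv0 i) hv1 fun i _ => hp _
      have htail : ∑ i : Fin (n + 1), w i.succ • p i.succ = r • y := by
        simp only [y, v, Finset.smul_sum, smul_smul, mul_div_cancel₀ _ hrpos.ne']
      have htail_f :
          r * ∑ i, v i * f (p i.succ) = ∑ i : Fin (n + 1), w i.succ * f (p i.succ) := by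
        simp only [v, Finset.mul_sum, ← mul_assoc, mul_div_cancel₀ _ hrpos.ne']
      have hr1 : 1 - w 0 = r := by linarith
      have htwo := hf (p 0) (hp 0) y hy (w 0) (hw0 0) (by linarith)
      have hy_le := mul_le_mul_of_nonneg_left
        (ih v (fun i => p i.succ) hv0 hv1 fun i => hp _) hr0
      have hra : r * (n * a) ≤ n * a :=
        mul_le_of_le_one_left (by positivity) (by linarith [hw0 0])
      rw [hr1] at htwo
      rw [htail]
      push_cast
      nlinarith

end ApproxConvex

lemma IsAlphaRelaxation.isApproxConvexOn_Ltwo {d : ℕ} {X : Set (Esp d)}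
    {M : Set ((Esp d → ℝ) → ℝ)} {α : (Esp d → ℝ) → ENNReal}
    (hM : IsAlphaRelaxation X M (Ltwo X) α) {g : Esp d → ℝ} (hg : ContinuousOn g X)
    (hgM : ∀ ℓ ∈ M, ℓ g ≤ 0) (hα : α g ≠ ⊤) :
    IsApproxConvexOn X g (α g).toReal := by
  intro x hx y hy t ht0 ht1
  obtain ⟨ℓ, hℓM, hℓ⟩ := hM _ ⟨x, hx, y, hy, t, ht0, ht1, rfl⟩ g hg
  have hdefect := (abs_le.mp ((ENNReal.ofReal_le_iff_le_toReal hα).mp hℓ)).2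
  linarith [hgM ℓ hℓM]

section ConvexEnvelope

variable {d : ℕ} {X : Set (Esp d)} {g : Esp d → ℝ} {x : Esp d}

def convEnvValues (X : Set (Esp d)) (g : Esp d → ℝ) (x : Esp d) : Set ℝ :=
  {t : ℝ | ∃ (p : Fin (d + 1) → Esp d) (l : Fin (d + 1) → ℝ),
    (∀ i, p i ∈ X) ∧ (∀ i, 0 ≤ l i) ∧ (∑ i, l i) = 1 ∧ (∑ i, l i • p i) = x ∧
    t = ∑ i, l i * g (p i)}

lemma convEnv_eq_sInf : convEnv X g x = sInf (convEnvValues X g x) := rfl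

lemma self_mem_convEnvValues (hx : x ∈ X) : g x ∈ convEnvValues X g x :=
  ⟨fun _ => x, Pi.single 0 1, fun _ => hx, fun _ => by simp [Pi.single_apply, apply_ite],
    by simp, by simp, by simp [Pi.single_apply]⟩

lemma IsApproxConvexOn.le_of_mem_convEnvValues {a : ℝ} (hg : IsApproxConvexOn X g a)
    (hX : Convex ℝ X) (ha : 0 ≤ a) {t : ℝ} (ht : t ∈ convEnvValues X g x) :
    g x - d * a ≤ t := by
  obtain ⟨p, l, hp, hl0, hl1, rfl, rfl⟩ := ht
  linarith [hg.map_sum_le hX ha d l p hl0 hl1 hp]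

lemma IsApproxConvexOn.abs_sub_convEnv_le {a : ℝ} (hg : IsApproxConvexOn X g a)
    (hX : Convex ℝ X) (ha : 0 ≤ a) (hx : x ∈ X) :
    |g x - convEnv X g x| ≤ d * a := by
  rw [convEnv_eq_sInf]
  have hlower : ∀ t ∈ convEnvValues X g x, g x - d * a ≤ t := fun _ =>
    hg.le_of_mem_convEnvValues hX ha
  have hle : sInf (convEnvValues X g x) ≤ g x :=
    csInf_le ⟨_, hlower⟩ (self_mem_convEnvValues hx)
  have hge : g x - d * a ≤ sInf (convEnvValues X g x) :=
    le_csInf ⟨_, self_mem_convEnvValues hx⟩ hlower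
  rw [abs_of_nonneg (sub_nonneg.mpr hle)]
  linarith

end ConvexEnvelope

theorem stmt5_general {d : ℕ} (X : Set (Esp d)) (hconv : Convex ℝ X)
    (α : (Esp d → ℝ) → ENNReal)
    (M : Set ((Esp d → ℝ) → ℝ)) (hM : IsAlphaRelaxation X M (Ltwo X) α)
    (g : Esp d → ℝ) (hg : ContinuousOn g X) (hgM : ∀ ℓ ∈ M, ℓ g ≤ 0) :
    ∀ x ∈ X, ENNReal.ofReal |g x - convEnv X g x| ≤ (d : ENNReal) * α g := by
  intro x hx
  rcases eq_or_ne (α g) ⊤ with hα | hα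
  · rcases eq_or_ne d 0 with rfl | hd
    · -- `0 * ⊤ = 0`, so here the bound is exact; it holds because `Esp 0` is a single point.
      have h := (isApproxConvexOn_of_subsingleton X g).abs_sub_convEnv_le hconv le_rfl hx
      simpa [ENNReal.ofReal_eq_zero] using h
    · simp [hα, hd]
  · have h := (hM.isApproxConvexOn_Ltwo hg hgM hα).abs_sub_convEnv_le hconv
      ENNReal.toReal_nonneg hx
    calc ENNReal.ofReal |g x - convEnv X g x| ≤ ENNReal.ofReal (d * (α g).toReal) :=
          ENNReal.ofReal_le_ofReal h
      _ = d * α g := by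
          rw [ENNReal.ofReal_mul (Nat.cast_nonneg d), ENNReal.ofReal_natCast,
            ENNReal.ofReal_toReal hα]

/-- Let `X ⊆ ℝ^d` be bounded, open and convex, `α : C(X) → [0,∞]`, and let
`M` be an `α`-relaxation of the set `L₂` of two-point convexity constraints.  Then for
every `g ∈ C(X)` with `ℓ(g) ≤ 0` for all `ℓ ∈ M`, the convex envelope `ḡ` of `g`
satisfies `‖g − ḡ‖_∞ ≤ d·α(g)`. -/
theorem stmt5 {d : ℕ} (X : Set (Esp d)) (hconv : Convex ℝ X) (hopen : IsOpen X)
    (hbdd : Bornology.IsBounded X) (α : (Esp d → ℝ) → ENNReal)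
    (M : Set ((Esp d → ℝ) → ℝ)) (hM : IsAlphaRelaxation X M (Ltwo X) α)
    (g : Esp d → ℝ) (hg : ContinuousOn g X) (hgM : ∀ ℓ ∈ M, ℓ g ≤ 0) :
    ∀ x ∈ X, ENNReal.ofReal |g x - convEnv X g x| ≤ (d : ENNReal) * α g :=
  stmt5_general X hconv α M hM g hg hgM

end
end

section
/- Let X be a bounded open convex subset of ℝ^d, let α : C(X) → [0,∞] be a function, let M be an α-relaxation of the set L₂ of two-point convexity constraints, and let g ∈ C(X) satisfy ℓ(g) ≤ 0 for all ℓ ∈ M. Then for every k ≥ 2, every choice of points x₁,…,x_k ∈ X and weights (λ₁,…,λ_k) in the simplex Δ^{k−1}, one has g(Σᵢ λᵢ xᵢ) − Σᵢ λᵢ g(xᵢ) ≤ k·α(g). -/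
open Set

noncomputable section

/-! Splitting off the last point, the `k`-point Jensen gap of `g` is a two-point gap plus the
`(k-1)`-point gap of the renormalised remaining weights scaled by their total mass `m ≤ 1`;
the two-point gaps are at most `α g` because each lies within `α g` of a constraint of `M`,
all of which are nonpositive at `g`. Induction on `k` gives the bound `(k - 1) α(g) ≤ k α(g)`. -/

section JensenGap

variable {E ι : Type*} [AddCommGroup E] [Module ℝ E]

def jensenGap [Fintype ι] (g : E → ℝ) (l : ι → ℝ) (p : ι → E) : ℝ :=
  g (∑ i, l i • p i) - ∑ i, l i * g (p i)

theorem jensenGap_single [Fintype ι] [DecidableEq ι] (g : E → ℝ) (p : ι → E) (j : ι) :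
    jensenGap g (Pi.single j 1) p = 0 := by
  simp [jensenGap, Pi.single_apply]

theorem jensenGap_eq_two_point_add {k : ℕ} (g : E → ℝ) (p : Fin (k + 2) → E)
    (l : Fin (k + 2) → ℝ) (hl1 : ∑ i, l i = 1) {m : ℝ} (hm : ∑ i, l (Fin.castSucc i) = m)
    (hm0 : m ≠ 0) :
    let l' := fun i => l (Fin.castSucc i) / m
    let q := ∑ i, l' i • p (Fin.castSucc i)
    jensenGap g l p =
      (g (m • q + (1 - m) • p (Fin.last _)) - m * g q - (1 - m) * g (p (Fin.last _)))
        + m * jensenGap g l' (p ∘ Fin.castSucc) := by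
  intro l' q
  have hlast : l (Fin.last _) = 1 - m := by rw [Fin.sum_univ_castSucc, hm] at hl1; linarith
  have hl' : ∀ i, m * l' i = l (Fin.castSucc i) := fun i => mul_div_cancel₀ _ hm0
  have hq : m • q = ∑ i, l (Fin.castSucc i) • p (Fin.castSucc i) := by
    simp only [q, Finset.smul_sum, smul_smul, hl']
  have hgq : m * ∑ i, l' i * g (p (Fin.castSucc i)) =
      ∑ i, l (Fin.castSucc i) * g (p (Fin.castSucc i)) := by
    simp only [Finset.mul_sum, ← mul_assoc, hl']
  simp only [jensenGap, Fin.sum_univ_castSucc (n := k + 1), hlast, hq, Function.comp_apply, mul_sub,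
    hgq]
  ring

theorem Convex.ofReal_jensenGap_le {s : Set E} (hs : Convex ℝ s) {g : E → ℝ} {c : ENNReal}
    (htwo : ∀ x ∈ s, ∀ y ∈ s, ∀ t : ℝ, 0 ≤ t → t ≤ 1 →
      ENNReal.ofReal (g (t • x + (1 - t) • y) - t * g x - (1 - t) * g y) ≤ c) :
    ∀ {k : ℕ} (p : Fin (k + 1) → E), (∀ i, p i ∈ s) → ∀ l : Fin (k + 1) → ℝ, (∀ i, 0 ≤ l i) →
      ∑ i, l i = 1 → ENNReal.ofReal (jensenGap g l p) ≤ k * c := by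
  intro k
  induction k with
  | zero =>
    intro p _ l _ hl1
    rw [show l = Pi.single 0 1 from funext fun i => by simpa [Fin.fin_one_eq_zero i] using hl1,
      jensenGap_single]
    simp
  | succ k ih =>
    intro p hp l hl0 hl1
    set m := ∑ i, l (Fin.castSucc i) with hm
    have hm0 : 0 ≤ m := Finset.sum_nonneg fun i _ => hl0 _
    have hm1 : m ≤ 1 := by
      have := hl0 (Fin.last _); rw [Fin.sum_univ_castSucc] at hl1; linarith
    rcases hm0.eq_or_lt with hm0 | hm0
    · have hzero : ∀ i, l (Fin.castSucc i) = 0 :=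
        fun i => (Finset.sum_eq_zero_iff_of_nonneg fun i _ => hl0 _).mp hm0.symm i
          (Finset.mem_univ i)
      have hsingle : l = Pi.single (Fin.last _) 1 := by
        funext i
        induction i using Fin.lastCases with
        | last => rw [Fin.sum_univ_castSucc, ← hm, ← hm0] at hl1; simpa using hl1
        | cast i => simp [hzero, (Fin.castSucc_lt_last i).ne]
      rw [hsingle, jensenGap_single]
      simp
    have hl'0 : ∀ i, 0 ≤ l (Fin.castSucc i) / m := fun i => div_nonneg (hl0 _) hm0.le
    have hl'1 : ∑ i, l (Fin.castSucc i) / m = 1 := by rw [← Finset.sum_div, div_self hm0.ne']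
    have hqs : ∑ i, (l (Fin.castSucc i) / m) • p (Fin.castSucc i) ∈ s :=
      hs.sum_mem (fun i _ => hl'0 i) hl'1 fun i _ => hp _
    rw [jensenGap_eq_two_point_add g p l hl1 hm.symm hm0.ne']
    calc _ ≤ c + ENNReal.ofReal m * (k * c) := by
          refine ENNReal.ofReal_add_le.trans (add_le_add (htwo _ hqs _ (hp _) m hm0.le hm1) ?_)
          rw [ENNReal.ofReal_mul hm0.le]
          gcongr; exact ih _ (fun i => hp _) _ hl'0 hl'1
      _ ≤ c + 1 * (k * c) := by gcongr; exact ENNReal.ofReal_le_one.mpr hm1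
      _ = (k + 1 : ℕ) * c := by push_cast; ring

end JensenGap

theorem IsAlphaRelaxation.ofReal_two_point_gap_le {d : ℕ} {X : Set (Esp d)}
    {α : (Esp d → ℝ) → ENNReal} {M : Set ((Esp d → ℝ) → ℝ)}
    (hM : IsAlphaRelaxation X M (Ltwo X) α) {g : Esp d → ℝ} (hg : ContinuousOn g X)
    (hgM : ∀ ℓ ∈ M, ℓ g ≤ 0) {x y : Esp d} (hx : x ∈ X) (hy : y ∈ X) {t : ℝ} (ht0 : 0 ≤ t)
    (ht1 : t ≤ 1) :
    ENNReal.ofReal (g (t • x + (1 - t) • y) - t * g x - (1 - t) * g y) ≤ α g := by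
  obtain ⟨ℓ, hℓM, hℓ⟩ := hM _ ⟨x, hx, y, hy, t, ht0, ht1, rfl⟩ g hg
  refine le_trans (ENNReal.ofReal_le_ofReal ?_) hℓ
  linarith [le_abs_self (g (t • x + (1 - t) • y) - t * g x - (1 - t) * g y - ℓ g), hgM ℓ hℓM]

theorem stmt6_general {d : ℕ} (X : Set (Esp d)) (hconv : Convex ℝ X)
    (α : (Esp d → ℝ) → ENNReal)
    (M : Set ((Esp d → ℝ) → ℝ)) (hM : IsAlphaRelaxation X M (Ltwo X) α)
    (g : Esp d → ℝ) (hg : ContinuousOn g X) (hgM : ∀ ℓ ∈ M, ℓ g ≤ 0)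
    (k : ℕ) (p : Fin k → Esp d) (hp : ∀ i, p i ∈ X)
    (l : Fin k → ℝ) (hl0 : ∀ i, 0 ≤ l i) (hl1 : (∑ i, l i) = 1) :
    ENNReal.ofReal (g (∑ i, l i • p i) - ∑ i, l i * g (p i)) ≤ (k : ENNReal) * α g := by
  obtain ⟨m, rfl⟩ : ∃ m, k = m + 1 := Nat.exists_eq_succ_of_ne_zero (by rintro rfl; simp at hl1)
  calc _ ≤ m * α g := hconv.ofReal_jensenGap_le
          (fun _ hx _ hy _ ht0 ht1 => hM.ofReal_two_point_gap_le hg hgM hx hy ht0 ht1) p hp l hl0 hl1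
    _ ≤ (m + 1 : ℕ) * α g := by gcongr; exact Nat.le_succ m

/-- Let `X ⊆ ℝ^d` be bounded, open and convex, `α : C(X) → [0,∞]`, let `M` be
an `α`-relaxation of `L₂`, and let `g ∈ C(X)` satisfy `ℓ(g) ≤ 0` for all `ℓ ∈ M`.  Then
for every `k ≥ 2`, points `x₁, …, x_k ∈ X` and weights `λ ∈ Δ^{k−1}`,
`g(∑ᵢ λᵢ xᵢ) − ∑ᵢ λᵢ g(xᵢ) ≤ k·α(g)`. -/
theorem stmt6 {d : ℕ} (X : Set (Esp d)) (hconv : Convex ℝ X) (hopen : IsOpen X)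
    (hbdd : Bornology.IsBounded X) (α : (Esp d → ℝ) → ENNReal)
    (M : Set ((Esp d → ℝ) → ℝ)) (hM : IsAlphaRelaxation X M (Ltwo X) α)
    (g : Esp d → ℝ) (hg : ContinuousOn g X) (hgM : ∀ ℓ ∈ M, ℓ g ≤ 0)
    (k : ℕ) (hk : 2 ≤ k) (p : Fin k → Esp d) (hp : ∀ i, p i ∈ X)
    (l : Fin k → ℝ) (hl0 : ∀ i, 0 ≤ l i) (hl1 : (∑ i, l i) = 1) :
    ENNReal.ofReal (g (∑ i, l i • p i) - ∑ i, l i * g (p i)) ≤ (k : ENNReal) * α g :=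
  stmt6_general X hconv α M hM g hg hgM k p hp l hl0 hl1

end
end

section
/- Let x, y, z, x', y', z' be points of ℝ^d with x ≠ y, x' ≠ y', z on the segment [x,y], z' on the segment [x',y'], and suppose ‖x − x'‖ ≤ η, ‖y − y'‖ ≤ η, ‖z − z'‖ ≤ η for some η ≥ 0. Let λ = ‖z−y‖/‖x−y‖ and λ' = ‖z'−y'‖/‖x'−y'‖. Then |λ − λ'| ≤ 4η/‖x−y‖. -/
/-! With `λ' ∈ [0,1]`, `λ - λ' = ((‖z-y‖ - ‖z'-y'‖) + λ' (‖x'-y'‖ - ‖x-y‖)) / ‖x-y‖`, and each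
bracket is at most `2η` in absolute value by the triangle inequality. -/

lemma abs_div_sub_div_le_of_le {a a' b b' : ℝ} (ha : 0 < a) (hb' : 0 ≤ b') (hba' : b' ≤ a') :
    |b / a - b' / a'| ≤ (|b - b'| + |a - a'|) / a := by
  set t := b' / a'
  have ht₀ : 0 ≤ t := div_nonneg hb' (hb'.trans hba')
  have ht₁ : t ≤ 1 := div_le_one_of_le₀ hba' (hb'.trans hba')
  -- `b' = t a'` also when `a' = 0`, since then `b' = 0`.
  have hb'_eq : b' = t * a' := by
    rcases (hb'.trans hba').eq_or_lt with ha' | ha'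
    · rw [← ha', mul_zero]; linarith
    · exact (div_mul_cancel₀ b' ha'.ne').symm
  have hdiff : b / a - t = ((b - b') + t * (a' - a)) / a := by
    rw [hb'_eq]; field_simp; ring
  rw [hdiff, abs_div, abs_of_pos ha]
  gcongr
  calc |b - b' + t * (a' - a)| ≤ |b - b'| + t * |a - a'| :=
        (abs_add_le _ _).trans_eq (by rw [abs_mul, abs_of_nonneg ht₀, abs_sub_comm a' a])
    _ ≤ |b - b'| + |a - a'| := by
        gcongr; exact mul_le_of_le_one_left (abs_nonneg _) ht₁

lemma abs_norm_sub_sub_norm_sub_le {E : Type*} [SeminormedAddCommGroup E] (x y x' y' : E) :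
    |‖x - y‖ - ‖x' - y'‖| ≤ ‖x - x'‖ + ‖y - y'‖ := by
  simpa only [dist_eq_norm, Real.norm_eq_abs] using dist_dist_dist_le x y x' y'

theorem stmt8_general {d : ℕ} (x y z x' y' z' : EuclideanSpace ℝ (Fin d)) (η : ℝ)
    (hxy : x ≠ y)
    (hz' : z' ∈ segment ℝ x' y')
    (hxx : ‖x - x'‖ ≤ η) (hyy : ‖y - y'‖ ≤ η) (hzz : ‖z - z'‖ ≤ η) :
    |‖z - y‖ / ‖x - y‖ - ‖z' - y'‖ / ‖x' - y'‖| ≤ 4 * η / ‖x - y‖ := by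
  have hxy_pos : 0 < ‖x - y‖ := norm_pos_iff.mpr (sub_ne_zero.mpr hxy)
  have hz'_le : ‖z' - y'‖ ≤ ‖x' - y'‖ :=
    norm_sub_le_of_mem_segment (segment_symm ℝ x' y' ▸ hz')
  calc _ ≤ (|‖z - y‖ - ‖z' - y'‖| + |‖x - y‖ - ‖x' - y'‖|) / ‖x - y‖ :=
        abs_div_sub_div_le_of_le hxy_pos (norm_nonneg _) hz'_le
    _ ≤ ((‖z - z'‖ + ‖y - y'‖) + (‖x - x'‖ + ‖y - y'‖)) / ‖x - y‖ := by
        gcongr <;> apply abs_norm_sub_sub_norm_sub_le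
    _ ≤ 4 * η / ‖x - y‖ := by gcongr; linarith

/-- Let `x, y, z, x', y', z'` be points of `ℝ^d` with `x ≠ y`, `x' ≠ y'`,
`z ∈ [x,y]`, `z' ∈ [x',y']`, and `‖x − x'‖ ≤ η`, `‖y − y'‖ ≤ η`, `‖z − z'‖ ≤ η` for some
`η ≥ 0`.  With `λ = ‖z−y‖/‖x−y‖` and `λ' = ‖z'−y'‖/‖x'−y'‖`, one has
`|λ − λ'| ≤ 4η/‖x−y‖`. -/
theorem stmt8 {d : ℕ} (x y z x' y' z' : EuclideanSpace ℝ (Fin d)) (η : ℝ) (hη : 0 ≤ η)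
    (hxy : x ≠ y) (hxy' : x' ≠ y')
    (hz : z ∈ segment ℝ x y) (hz' : z' ∈ segment ℝ x' y')
    (hxx : ‖x - x'‖ ≤ η) (hyy : ‖y - y'‖ ≤ η) (hzz : ‖z - z'‖ ≤ η) :
    |‖z - y‖ / ‖x - y‖ - ‖z' - y'‖ / ‖x' - y'‖| ≤ 4 * η / ‖x - y‖ :=
  stmt8_general x y z x' y' z' η hxy hz' hxx hyy hzz
end

section
/- There is a universal constant c > 0 with the following property. Let x, y, z be three points of the unit sphere S^{d−1} lying on a common great circle, with x and y not antipodal, z on the minimizing geodesic arc from x to y, and such that ‖x−z‖ ≥ ε/2 and ‖y−z‖ ≥ ε/2 for some ε > 0. Let z' be the radial projection of z on the segment [x,y], i.e. the point of [x,y] with z'/‖z'‖ = z. Then ‖z'‖ ≤ 1 − c ε². Consequently, the constant function s ≡ 1 on S^{d−1} satisfies ℓ_{xyz}(s) = ‖z'‖ − 1 ≤ −c ε², so every form ℓ in a spherical constraint set M_ε^s built from ε/2-sparse great-circle samples satisfies ℓ(s) ≤ −c ε². -/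
open Set

noncomputable section

/-!
Since `z` is the direction of `z'`, `‖z'‖ = ⟪z, z'⟫`. For unit vectors `⟪z, x⟫ = 1 - ‖x - z‖² / 2`,
so the separation `ε / 2 ≤ ‖x - z‖, ‖y - z‖` bounds `⟪z, x⟫` and `⟪z, y⟫` by `1 - ε² / 8`, and this
bound passes to the convex combination `z'` of `x` and `y`. Hence `c = 1 / 8` works.
-/

section InnerProductSpace

open scoped InnerProductSpace

variable {F : Type*} [NormedAddCommGroup F] [InnerProductSpace ℝ F]

theorem real_inner_eq_one_sub_norm_sub_sq_div_two {x y : F} (hx : ‖x‖ = 1) (hy : ‖y‖ = 1) :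
    ⟪x, y⟫_ℝ = 1 - ‖x - y‖ ^ 2 / 2 := by
  rw [norm_sub_sq_real, hx, hy]
  ring

theorem real_inner_le_one_sub_sq_div_eight {x y : F} {ε : ℝ} (hx : ‖x‖ = 1) (hy : ‖y‖ = 1)
    (hε : 0 ≤ ε) (hxy : ε / 2 ≤ ‖x - y‖) : ⟪x, y⟫_ℝ ≤ 1 - ε ^ 2 / 8 := by
  have hsq : (ε / 2) ^ 2 ≤ ‖x - y‖ ^ 2 := pow_le_pow_left₀ (by positivity) hxy 2
  rw [real_inner_eq_one_sub_norm_sub_sq_div_two hx hy]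
  linarith

theorem real_inner_inv_norm_smul_self (v : F) : ⟪‖v‖⁻¹ • v, v⟫_ℝ = ‖v‖ := by
  rcases eq_or_ne v 0 with rfl | hv
  · simp
  · rw [real_inner_smul_left, real_inner_self_eq_norm_sq]
    field_simp [norm_ne_zero_iff.2 hv]

theorem real_inner_le_of_mem_segment {z x y w : F} {t : ℝ} (hx : ⟪z, x⟫_ℝ ≤ t)
    (hy : ⟪z, y⟫_ℝ ≤ t) (hw : w ∈ segment ℝ x y) : ⟪z, w⟫_ℝ ≤ t :=
  (convex_halfSpace_le (innerₛₗ ℝ z).isLinear t).segment_subset hx hy hw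

theorem norm_le_one_sub_sq_div_eight_of_mem_segment {x y z z' : F} {ε : ℝ} (hε : 0 ≤ ε)
    (hx : ‖x‖ = 1) (hy : ‖y‖ = 1) (hz : ‖z‖ = 1) (hz' : z' ∈ segment ℝ x y)
    (hzz' : z = ‖z'‖⁻¹ • z') (hxz : ε / 2 ≤ ‖x - z‖) (hyz : ε / 2 ≤ ‖y - z‖) :
    ‖z'‖ ≤ 1 - ε ^ 2 / 8 := by
  have hzx : ⟪z, x⟫_ℝ ≤ 1 - ε ^ 2 / 8 := by
    rw [real_inner_comm]
    exact real_inner_le_one_sub_sq_div_eight hx hz hε hxz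
  have hzy : ⟪z, y⟫_ℝ ≤ 1 - ε ^ 2 / 8 := by
    rw [real_inner_comm]
    exact real_inner_le_one_sub_sq_div_eight hy hz hε hyz
  calc ‖z'‖ = ⟪z, z'⟫_ℝ := by rw [hzz', real_inner_inv_norm_smul_self]
    _ ≤ 1 - ε ^ 2 / 8 := real_inner_le_of_mem_segment hzx hzy hz'

end InnerProductSpace

/-- There is a universal constant `c > 0` such that: for any three points
`x, y, z` of the unit sphere `S^{d−1}` with `x, y` not antipodal, `z` on the minimizing
geodesic arc from `x` to `y` (i.e. the radial projection `z'` of `z` lies on the chord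
`[x,y]`, `z' ≠ 0`, `z = z'/‖z'‖`), and `‖x−z‖ ≥ ε/2`, `‖y−z‖ ≥ ε/2` for some `ε > 0`,
one has `‖z'‖ ≤ 1 − c ε²`; consequently the constant function `s ≡ 1` satisfies
`ℓ_{xyz}(s) = ‖z'‖·1 − λ·1 − (1−λ)·1 = ‖z'‖ − 1 ≤ −c ε²` (with `λ = ‖z−y‖/‖x−y‖`),
so every form of a spherical constraint set `M_ε^s` built from `ε/2`-sparse great-circle
samples satisfies `ℓ(s) ≤ −c ε²`. -/
theorem stmt14 : ∃ c : ℝ, 0 < c ∧ ∀ (d : ℕ) (x y z z' : Esp d) (ε : ℝ), 0 < ε →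
    x ∈ Metric.sphere (0 : Esp d) 1 → y ∈ Metric.sphere (0 : Esp d) 1 →
    z ∈ Metric.sphere (0 : Esp d) 1 → x ≠ y → x ≠ -y →
    z' ∈ segment ℝ x y → z' ≠ 0 → z = ‖z'‖⁻¹ • z' →
    ε / 2 ≤ ‖x - z‖ → ε / 2 ≤ ‖y - z‖ →
    ‖z'‖ ≤ 1 - c * ε ^ 2 ∧
      ‖z'‖ * (1 : ℝ) - (‖z - y‖ / ‖x - y‖) * (1 : ℝ) -
        (1 - ‖z - y‖ / ‖x - y‖) * (1 : ℝ) ≤ -(c * ε ^ 2) := by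
  refine ⟨1 / 8, by norm_num, ?_⟩
  intro d x y z z' ε hε hx hy hz _ _ hz' _ hzz' hxz hyz
  rw [mem_sphere_zero_iff_norm] at hx hy hz
  have hbound := norm_le_one_sub_sq_div_eight_of_mem_segment hε.le hx hy hz hz' hzz' hxz hyz
  constructor <;> linarith

end
end
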